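/- arXiv:dg-ga/9501004 — 3 statements merged into one kernel-verified Lean document; each statement's English description precedes it below -/
import Mathlib

section
/- (Plücker relation, form (3) of Lemma 3.5) Let (Z^J) be Plücker coordinates of a point of G_{k,n} as antisymmetric minor functions of a k×n complex matrix. Then for any multi-indices J, K each of length k and any a, b ∈ {1,…,n}: Σ_{j ∈ J\K} Z^{ajJ} Z^{bjK} = −δ(a ∉ K)·Z^J·Z^{baK} + δ(a ∉ J)·Z^{baJ}·Z^K, where δ(P) = 1 if P holds and 0 otherwise. -/
open Complex

/-- The vector space with basis `θ_S` indexed by subsets of `{1,…,n}`. -/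
abbrev SpinModule (n : ℕ) : Type := Finset (Fin n) → ℂ

/-- The sign arising when reducing `θ_{iS}` to `± θ_{S Δ {i}}`. -/
def cliffordSign {n : ℕ} (i : Fin n) (S : Finset (Fin n)) : ℂ :=
  (-1 : ℂ) ^ (S.filter (fun j => j < i)).card * (if i ∈ S then 1 else -1)

/-- The prepending operator determined by `e_i θ_I = θ_{iI}`. -/
def genR {n : ℕ} (i : Fin n) : SpinModule n →ₗ[ℂ] SpinModule n where
  toFun f := fun S => cliffordSign i S * f (symmDiff S {i})
  map_add' f g := by funext S; simp [mul_add]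
  map_smul' c f := by funext S; simp [smul_eq_mul]; ring

/-- `θ_L` for an arbitrary multi-index (list) `L`, via `θ_L = e_{l₁} ⋯ e_{lₘ} θ_∅`;
this encodes the reduction relations `θ_{iiI} = −θ_I`, `θ_{ijI} = −θ_{jiI}`. -/
def thetaList {n : ℕ} (L : List (Fin n)) : SpinModule n :=
  L.foldr (fun i f => genR i f) (Pi.single (∅ : Finset (Fin n)) 1)

/-- The coordinate `Z^L` of `ψ = Σ_S Z^S θ_S` for an arbitrary multi-index `L`,
extended from subsequences of `(1,…,n)` by the relations
`θ_{iiI} = −θ_I` and `θ_{ijI} = −θ_{jiI}`. -/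
noncomputable def Zcoord {n : ℕ} (ψ : SpinModule n) (L : List (Fin n)) : ℂ :=
  ∑ S : Finset (Fin n), thetaList L S * ψ S

/-- The Plücker coordinates of a point of `G_{k,n}` given by a `k × n` matrix `M`:
the coefficient `Z^S` is the `k × k` minor of `M` on the columns `S`. -/
noncomputable def minorCoords {n k : ℕ} (M : Matrix (Fin k) (Fin n) ℂ) : SpinModule n :=
  fun S => if h : S.card = k then (M.submatrix id (S.orderEmbOfFin h)).det else 0

/-!
Writing `genR i = wedge i - contract i` (creation minus annihilation) and using that `genR i`
is skew-adjoint for the pairing `Zcoord`, every index prepended to `J` or `K` moves onto `ψ`, so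
both sides become values of `genR j (genR a ψ)`, `genR a (genR b ψ)`, `ψ` at the finsets of `J`
and `K`, up to one common sign. For `j ∈ J \ K` only the part `wedge j ⊗ contract j` survives;
commuting `wedge j` and `contract j` past `genR a` and `genR b` leaves
`∑ j, wedge j ψ U * contract j ψ V`, which vanishes by the classical quadratic Plücker
relations, plus the boundary terms `j = a` and `j = b`, which are the right-hand side.
-/

namespace Finset

section

variable {α : Type*} [DecidableEq α]

lemma symmDiff_singleton_of_mem {i : α} {S : Finset α} (h : i ∈ S) :
    symmDiff S {i} = S.erase i := by
  ext x; by_cases hx : x = i <;> simp [mem_symmDiff, hx, h]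

lemma symmDiff_singleton_of_notMem {i : α} {S : Finset α} (h : i ∉ S) :
    symmDiff S {i} = insert i S := by
  ext x; by_cases hx : x = i <;> simp [mem_symmDiff, hx, h]

end

variable {α : Type*} [LinearOrder α]

lemma card_filter_lt_orderEmbOfFin {S : Finset α} {m : ℕ} (h : S.card = m) (c : Fin m) :
    (S.filter (· < S.orderEmbOfFin h c)).card = c := by
  set u := S.orderEmbOfFin h
  have hS : S = univ.image u := (S.image_orderEmbOfFin_univ h).symm
  calc (S.filter (· < u c)).card = ((univ.image u).filter (· < u c)).card := by
        rw [← hS]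
    _ = (Iio c).card := by
        rw [filter_image, card_image_of_injective _ u.injective]
        congr 1; ext d; simp
    _ = c := Fin.card_Iio c

lemma orderEmbOfFin_comp_succAbove {U V : Finset α} {m : ℕ} (hU : U.card = m + 1)
    (hV : V.card = m) (c : Fin (m + 1)) (hUV : U.erase (U.orderEmbOfFin hU c) = V) :
    U.orderEmbOfFin hU ∘ c.succAbove = V.orderEmbOfFin hV := by
  subst hUV
  refine orderEmbOfFin_unique hV (fun x => mem_erase.2 ⟨?_, ?_⟩)
    ((U.orderEmbOfFin hU).strictMono.comp c.strictMono_succAbove)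
  · exact fun h => c.succAbove_ne x ((U.orderEmbOfFin hU).injective h)
  · exact orderEmbOfFin_mem U hU _

end Finset

namespace SpinModule

variable {n : ℕ}

lemma ite_lt_neg_one_one_comm {α : Type*} [LinearOrder α] {i j : α} (h : i ≠ j) :
    (if i < j then (-1 : ℂ) else 1) = -if j < i then -1 else 1 := by
  rcases h.lt_or_gt with h | h <;> simp [h, h.not_gt]

def ltSign (i : Fin n) (S : Finset (Fin n)) : ℂ :=
  (-1 : ℂ) ^ (S.filter (· < i)).card

lemma cliffordSign_eq (i : Fin n) (S : Finset (Fin n)) :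
    cliffordSign i S = ltSign i S * if i ∈ S then 1 else -1 := rfl

lemma ltSign_mul_self (i : Fin n) (S : Finset (Fin n)) : ltSign i S * ltSign i S = 1 := by
  simp [ltSign, ← pow_add, ← two_mul, pow_mul]

lemma ltSign_insert {j : Fin n} {S : Finset (Fin n)} (i : Fin n) (h : j ∉ S) :
    ltSign i (insert j S) = (if j < i then -1 else 1) * ltSign i S := by
  unfold ltSign
  rw [Finset.filter_insert]
  split_ifs with hj
  · rw [Finset.card_insert_of_notMem (by simp [h]), pow_succ, mul_comm]
  · rw [one_mul]

lemma ltSign_erase {j : Fin n} {S : Finset (Fin n)} (i : Fin n) (h : j ∈ S) :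
    ltSign i (S.erase j) = (if j < i then -1 else 1) * ltSign i S := by
  conv_rhs => rw [← Finset.insert_erase h, ltSign_insert i (Finset.notMem_erase j S)]
  split_ifs <;> simp

lemma ltSign_orderEmbOfFin {S : Finset (Fin n)} {m : ℕ} (h : S.card = m) (c : Fin m) :
    ltSign (S.orderEmbOfFin h c) S = (-1) ^ (c : ℕ) := by
  rw [ltSign, Finset.card_filter_lt_orderEmbOfFin]

def wedge (i : Fin n) : SpinModule n →ₗ[ℂ] SpinModule n where
  toFun f S := if i ∈ S then ltSign i S * f (S.erase i) else 0
  map_add' f g := by funext S; by_cases h : i ∈ S <;> simp [h, mul_add]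
  map_smul' c f := by funext S; by_cases h : i ∈ S <;> simp [h, mul_left_comm]

def contract (i : Fin n) : SpinModule n →ₗ[ℂ] SpinModule n where
  toFun f S := if i ∈ S then 0 else ltSign i S * f (insert i S)
  map_add' f g := by funext S; by_cases h : i ∈ S <;> simp [h, mul_add]
  map_smul' c f := by funext S; by_cases h : i ∈ S <;> simp [h, mul_left_comm]

section Operators

variable {i : Fin n} {S : Finset (Fin n)} (f : SpinModule n)

lemma wedge_apply_of_mem (h : i ∈ S) : wedge i f S = ltSign i S * f (S.erase i) := if_pos h

@[simp] lemma wedge_apply_of_notMem (h : i ∉ S) : wedge i f S = 0 := if_neg h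

@[simp] lemma contract_apply_of_mem (h : i ∈ S) : contract i f S = 0 := if_pos h

lemma contract_apply_of_notMem (h : i ∉ S) :
    contract i f S = ltSign i S * f (insert i S) := if_neg h

end Operators

lemma genR_apply (i : Fin n) (f : SpinModule n) (S : Finset (Fin n)) :
    genR i f S = cliffordSign i S * f (symmDiff S {i}) := rfl

lemma genR_eq_wedge_sub_contract (i : Fin n) : genR i = wedge i - contract i := by
  refine LinearMap.ext fun f => funext fun S => ?_
  rw [genR_apply, cliffordSign_eq, LinearMap.sub_apply, Pi.sub_apply]
  by_cases h : i ∈ S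
  · simp [h, Finset.symmDiff_singleton_of_mem, wedge_apply_of_mem]
  · simp [h, Finset.symmDiff_singleton_of_notMem, contract_apply_of_notMem]

section Anticommutation

variable (j a : Fin n) (f : SpinModule n) (S : Finset (Fin n))

lemma wedge_wedge_apply : wedge j (wedge a f) S = -wedge a (wedge j f) S := by
  rcases eq_or_ne j a with rfl | hja
  · by_cases hj : j ∈ S <;> simp [hj, wedge_apply_of_mem]
  by_cases hj : j ∈ S
  · by_cases ha : a ∈ S
    · rw [wedge_apply_of_mem _ hj, wedge_apply_of_mem _ ha,
        wedge_apply_of_mem _ (Finset.mem_erase.2 ⟨hja.symm, ha⟩),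
        wedge_apply_of_mem _ (Finset.mem_erase.2 ⟨hja, hj⟩), ltSign_erase a hj,
        ltSign_erase j ha, Finset.erase_right_comm, ite_lt_neg_one_one_comm hja]
      ring
    · simp [hj, ha, wedge_apply_of_mem]
  · by_cases ha : a ∈ S <;> simp [hj, ha, wedge_apply_of_mem]

lemma contract_contract_apply : contract j (contract a f) S = -contract a (contract j f) S := by
  rcases eq_or_ne j a with rfl | hja
  · by_cases hj : j ∈ S <;> simp [hj, contract_apply_of_notMem]
  by_cases hj : j ∈ S
  · by_cases ha : a ∈ S <;> simp [hj, ha, contract_apply_of_notMem]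
  · by_cases ha : a ∈ S
    · simp [hj, ha, contract_apply_of_notMem]
    · rw [contract_apply_of_notMem _ hj, contract_apply_of_notMem _ ha,
        contract_apply_of_notMem _ (by simp [hja.symm, ha]),
        contract_apply_of_notMem _ (by simp [hja, hj]), ltSign_insert a hj, ltSign_insert j ha,
        Finset.insert_comm, ite_lt_neg_one_one_comm hja]
      ring

lemma wedge_contract_apply_add_contract_wedge_apply :
    wedge j (contract a f) S + contract a (wedge j f) S = if j = a then f S else 0 := by
  rcases eq_or_ne j a with rfl | hja
  · rw [if_pos rfl]
    by_cases hj : j ∈ S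
    · rw [wedge_apply_of_mem _ hj, contract_apply_of_notMem _ (Finset.notMem_erase j S),
        contract_apply_of_mem _ hj, ltSign_erase j hj, Finset.insert_erase hj]
      simp only [lt_irrefl, if_false, one_mul, add_zero, ← mul_assoc, ltSign_mul_self]
    · rw [wedge_apply_of_notMem _ hj, contract_apply_of_notMem _ hj,
        wedge_apply_of_mem _ (Finset.mem_insert_self j S), ltSign_insert j hj,
        Finset.erase_insert hj]
      simp only [lt_irrefl, if_false, one_mul, zero_add, ← mul_assoc, ltSign_mul_self]
  rw [if_neg hja]
  by_cases hj : j ∈ S <;> by_cases ha : a ∈ S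
  · simp [hj, ha, hja.symm, wedge_apply_of_mem]
  · rw [wedge_apply_of_mem _ hj, contract_apply_of_notMem _ ha,
      contract_apply_of_notMem _ (fun h => ha (Finset.mem_of_mem_erase h)),
      wedge_apply_of_mem _ (Finset.mem_insert_of_mem hj), ltSign_erase a hj, ltSign_insert j ha,
      ← Finset.erase_insert_of_ne hja.symm, ite_lt_neg_one_one_comm hja]
    ring
  · simp [hj, ha]
  · simp [hj, ha, hja, contract_apply_of_notMem]

lemma wedge_genR_apply :
    wedge j (genR a f) S = -genR a (wedge j f) S - if j = a then f S else 0 := by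
  simp only [genR_eq_wedge_sub_contract, LinearMap.sub_apply, map_sub, Pi.sub_apply]
  linear_combination
    wedge_wedge_apply j a f S - wedge_contract_apply_add_contract_wedge_apply j a f S

lemma contract_genR_apply :
    contract j (genR a f) S = -genR a (contract j f) S + if j = a then f S else 0 := by
  have hanti := wedge_contract_apply_add_contract_wedge_apply a j f S
  simp only [@eq_comm _ a j] at hanti
  simp only [genR_eq_wedge_sub_contract, LinearMap.sub_apply, map_sub, Pi.sub_apply]
  linear_combination hanti - contract_contract_apply j a f S

end Anticommutation

lemma cliffordSign_symmDiff_singleton (i : Fin n) (S : Finset (Fin n)) :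
    cliffordSign i (symmDiff S {i}) = -cliffordSign i S := by
  by_cases h : i ∈ S
  · rw [Finset.symmDiff_singleton_of_mem h, cliffordSign_eq, cliffordSign_eq, ltSign_erase i h]
    simp [h]
  · rw [Finset.symmDiff_singleton_of_notMem h, cliffordSign_eq, cliffordSign_eq, ltSign_insert i h]
    simp [h]

lemma Zcoord_nil (ψ : SpinModule n) : Zcoord ψ [] = ψ ∅ := by
  simp [Zcoord, thetaList, Pi.single_apply]

/-- Reindex by the involution `S ↦ S Δ {i}`, which flips `cliffordSign i`. -/
lemma Zcoord_cons (ψ : SpinModule n) (i : Fin n) (L : List (Fin n)) :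
    Zcoord ψ (i :: L) = -Zcoord (genR i ψ) L := by
  rw [Zcoord, Zcoord, ← Finset.sum_neg_distrib]
  refine Fintype.sum_equiv (Function.Involutive.toPerm (symmDiff · {i})
    fun S => symmDiff_symmDiff_cancel_right {i} S) _ _ fun S => ?_
  change genR i (thetaList L) S * ψ S
    = -(thetaList L (symmDiff S {i}) * genR i ψ (symmDiff S {i}))
  rw [genR_apply, genR_apply, cliffordSign_symmDiff_singleton, symmDiff_symmDiff_cancel_right]
  ring

lemma Zcoord_cons_cons (ψ : SpinModule n) (x y : Fin n) (L : List (Fin n)) :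
    Zcoord ψ (x :: y :: L) = Zcoord (genR y (genR x ψ)) L := by
  rw [Zcoord_cons, Zcoord_cons, neg_neg]

lemma exists_Zcoord_eq_mul_of_nodup {L : List (Fin n)} (hL : L.Nodup) :
    ∃ ε : ℂ, ∀ ψ : SpinModule n, Zcoord ψ L = ε * ψ L.toFinset := by
  induction L with
  | nil => exact ⟨1, fun ψ => by simp [Zcoord_nil]⟩
  | cons i L ih =>
    obtain ⟨hi, hL⟩ := List.nodup_cons.1 hL
    obtain ⟨ε, hε⟩ := ih hL
    have hiL : i ∉ L.toFinset := List.mem_toFinset.not.2 hi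
    refine ⟨-ε * cliffordSign i L.toFinset, fun ψ => ?_⟩
    rw [Zcoord_cons, hε, genR_apply, Finset.symmDiff_singleton_of_notMem hiL, List.toFinset_cons]
    ring

/-- Degrees are integers so that `contract` lowers the degree without truncation. -/
def IsHomogeneous (m : ℤ) (f : SpinModule n) : Prop :=
  ∀ S : Finset (Fin n), (S.card : ℤ) ≠ m → f S = 0

namespace IsHomogeneous

variable {m : ℤ} {f : SpinModule n}

lemma wedge (hf : IsHomogeneous m f) (i : Fin n) : IsHomogeneous (m + 1) (wedge i f) := by
  intro S hS
  by_cases h : i ∈ S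
  · rw [wedge_apply_of_mem _ h, hf _ (by rw [Finset.cast_card_erase_of_mem h]; omega), mul_zero]
  · exact wedge_apply_of_notMem _ h

lemma contract (hf : IsHomogeneous m f) (i : Fin n) : IsHomogeneous (m - 1) (contract i f) := by
  intro S hS
  by_cases h : i ∈ S
  · exact contract_apply_of_mem _ h
  · rw [contract_apply_of_notMem _ h, hf _ (by rw [Finset.card_insert_of_notMem h]; omega),
      mul_zero]

end IsHomogeneous

section Homogeneous

variable {m : ℤ} {f : SpinModule n} (hf : IsHomogeneous m f) (a b : Fin n) {S : Finset (Fin n)}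
  (hS : (S.card : ℤ) = m)
include hf hS

lemma genR_wedge_apply_of_card :
    genR a (wedge b f) S = (if a ∈ S then 0 else 1) * genR a (genR b f) S := by
  have hRR : wedge a (wedge b f) S = 0 := (hf.wedge b).wedge a S (by omega)
  have hLL : contract a (contract b f) S = 0 := (hf.contract b).contract a S (by omega)
  simp only [genR_eq_wedge_sub_contract, LinearMap.sub_apply, map_sub, Pi.sub_apply, hRR, hLL]
  by_cases ha : a ∈ S <;> simp [ha]

lemma genR_contract_apply_of_card :
    genR b (contract a f) S
      = (if a ∈ S then 0 else 1) * genR a (genR b f) S + if a = b then f S else 0 := by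
  have hRR : wedge a (wedge b f) S = 0 := (hf.wedge b).wedge a S (by omega)
  have hLL : contract b (contract a f) S = 0 := (hf.contract a).contract b S (by omega)
  have hLL' : contract a (contract b f) S = 0 := (hf.contract b).contract a S (by omega)
  have hanti := wedge_contract_apply_add_contract_wedge_apply b a f S
  simp only [@eq_comm _ b a] at hanti
  simp only [genR_eq_wedge_sub_contract, LinearMap.sub_apply, map_sub, Pi.sub_apply, hRR, hLL,
    hLL']
  by_cases ha : a ∈ S
  · simp only [ha, contract_apply_of_mem, if_true] at hanti ⊢
    linear_combination hanti
  · simp only [ha, not_false_eq_true, wedge_apply_of_notMem, if_false] at hanti ⊢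
    linear_combination hanti

end Homogeneous

section Sums

variable (X Y : SpinModule n) (S T : Finset (Fin n))

lemma sum_sdiff_genR_mul_genR :
    ∑ j ∈ S \ T, genR j X S * genR j Y T = -∑ j, wedge j X S * contract j Y T := by
  rw [← Finset.sum_subset (Finset.subset_univ (S \ T)), ← Finset.sum_neg_distrib]
  · refine Finset.sum_congr rfl fun j hj => ?_
    obtain ⟨hjS, hjT⟩ := Finset.mem_sdiff.1 hj
    simp [genR_eq_wedge_sub_contract, hjS, hjT]
  · intro j _ hj
    by_cases hjS : j ∈ S
    · simp [show j ∈ T by simpa [hjS] using hj]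
    · simp [hjS]

lemma sum_wedge_genR_mul_contract_genR (a b : Fin n) :
    ∑ j, wedge j (genR a X) S * contract j (genR b Y) T
      = ∑ j, genR a (wedge j X) S * genR b (contract j Y) T
        - genR a (wedge b X) S * Y T + X S * genR b (contract a Y) T
        - if a = b then X S * Y T else 0 := by
  have hterm : ∀ j, wedge j (genR a X) S * contract j (genR b Y) T
      = genR a (wedge j X) S * genR b (contract j Y) T
        - (if j = b then genR a (wedge j X) S * Y T else 0)
        + (if j = a then X S * genR b (contract j Y) T else 0)
        - (if j = a then if j = b then X S * Y T else 0 else 0) := by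
    intro j
    rw [wedge_genR_apply, contract_genR_apply]
    split_ifs <;> ring
  simp only [hterm, Finset.sum_add_distrib, Finset.sum_sub_distrib, Finset.sum_ite_eq',
    Finset.mem_univ, if_true]

end Sums

section Minors

variable {k : ℕ}

lemma isHomogeneous_minorCoords (M : Matrix (Fin k) (Fin n) ℂ) :
    IsHomogeneous k (minorCoords M) :=
  fun _ hS => dif_neg (by exact_mod_cast hS)

lemma wedge_minorCoords_orderEmbOfFin (M : Matrix (Fin k) (Fin n) ℂ) {U : Finset (Fin n)}
    (hU : U.card = k + 1) (c : Fin (k + 1)) :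
    wedge (U.orderEmbOfFin hU c) (minorCoords M) U
      = (-1) ^ (c : ℕ) * (M.submatrix id (U.orderEmbOfFin hU ∘ c.succAbove)).det := by
  have hcard : (U.erase (U.orderEmbOfFin hU c)).card = k := by
    rw [Finset.card_erase_of_mem (Finset.orderEmbOfFin_mem U hU c), hU, Nat.add_sub_cancel]
  rw [wedge_apply_of_mem _ (Finset.orderEmbOfFin_mem U hU c), ltSign_orderEmbOfFin, minorCoords,
    dif_pos hcard, Finset.orderEmbOfFin_comp_succAbove hU hcard c rfl]

/-- Laplace expansion along a repeated row. -/
lemma sum_wedge_minorCoords_mul_apply (M : Matrix (Fin k) (Fin n) ℂ) (U : Finset (Fin n))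
    (i : Fin k) : ∑ j, wedge j (minorCoords M) U * M i j = 0 := by
  by_cases hU : U.card = k + 1
  swap
  · refine Finset.sum_eq_zero fun j _ => ?_
    rw [(isHomogeneous_minorCoords M).wedge j U (by omega), zero_mul]
  set u := U.orderEmbOfFin hU
  have hrow : (M.submatrix (Fin.cons i id) u).det = 0 :=
    Matrix.det_zero_of_row_eq (Fin.succ_ne_zero i).symm (by ext; simp)
  calc ∑ j, wedge j (minorCoords M) U * M i j
      = ∑ j ∈ U, wedge j (minorCoords M) U * M i j :=
        (Finset.sum_subset (Finset.subset_univ U) fun j _ hj => by simp [hj]).symm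
    _ = ∑ c, wedge (u c) (minorCoords M) U * M i (u c) := by
        have h := Finset.sum_map Finset.univ u.toEmbedding
          fun j => wedge j (minorCoords M) U * M i j
        rwa [Finset.map_orderEmbOfFin_univ] at h
    _ = (M.submatrix (Fin.cons i id) u).det := by
        rw [Matrix.det_succ_row_zero]
        refine Finset.sum_congr rfl fun c _ => ?_
        have hminor : (M.submatrix (Fin.cons i id) u).submatrix Fin.succ c.succAbove
            = M.submatrix id (u ∘ c.succAbove) := by ext; simp
        rw [wedge_minorCoords_orderEmbOfFin, hminor, Matrix.submatrix_apply, Fin.cons_zero]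
        ring
    _ = 0 := hrow

/-- Laplace expansion of the minor on the columns `insert j V` along the column `j`. -/
lemma contract_minorCoords_eq_sum {m : ℕ} (M : Matrix (Fin (m + 1)) (Fin n) ℂ)
    {V : Finset (Fin n)} (hV : V.card = m) (j : Fin n) :
    contract j (minorCoords M) V
      = ∑ i : Fin (m + 1),
          (-1) ^ (i : ℕ) * M i j * (M.submatrix i.succAbove (V.orderEmbOfFin hV)).det := by
  set v := V.orderEmbOfFin hV
  by_cases hj : j ∈ V
  · obtain ⟨c, hc⟩ : j ∈ Set.range v := by rwa [Finset.range_orderEmbOfFin]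
    have hcol : (M.submatrix id (Fin.cons j v : Fin (m + 1) → Fin n)).det = 0 :=
      Matrix.det_zero_of_column_eq (Fin.succ_ne_zero c).symm (by simp [hc])
    rw [contract_apply_of_mem _ hj, ← hcol, Matrix.det_succ_column_zero]
    refine Finset.sum_congr rfl fun i _ => ?_
    congr 2
  · have hW : (insert j V).card = m + 1 := by rw [Finset.card_insert_of_notMem hj, hV]
    set w := (insert j V).orderEmbOfFin hW
    obtain ⟨p, hp⟩ : j ∈ Set.range w := by
      rw [Finset.range_orderEmbOfFin]; exact Finset.mem_insert_self j V
    have hwv : w ∘ p.succAbove = v :=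
      Finset.orderEmbOfFin_comp_succAbove hW hV p (by rw [hp, Finset.erase_insert hj])
    have hsign : ltSign j V = (-1) ^ (p : ℕ) := by
      rw [← ltSign_orderEmbOfFin hW p, hp, ltSign_insert j hj, if_neg (lt_irrefl j), one_mul]
    rw [contract_apply_of_notMem _ hj, hsign, minorCoords, dif_pos hW,
      Matrix.det_succ_column _ p, Finset.mul_sum]
    refine Finset.sum_congr rfl fun i _ => ?_
    have hminor : (M.submatrix id w).submatrix i.succAbove p.succAbove
        = M.submatrix i.succAbove v := by rw [Matrix.submatrix_submatrix, ← hwv]; rfl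
    have hp2 : ((-1 : ℂ) ^ (p : ℕ)) * (-1) ^ (p : ℕ) = 1 := by
      rw [← pow_add, ← two_mul, pow_mul]; norm_num
    rw [hminor, Matrix.submatrix_apply, id, hp, pow_add]
    linear_combination (-1) ^ (i : ℕ) * M i j * (M.submatrix i.succAbove v).det * hp2

/-- The quadratic Plücker relations: each `contract j (minorCoords M) V` is a combination of
the entries `M i j`, which `sum_wedge_minorCoords_mul_apply` annihilates. -/
lemma sum_wedge_mul_contract_minorCoords (M : Matrix (Fin k) (Fin n) ℂ) (U V : Finset (Fin n)) :
    ∑ j, wedge j (minorCoords M) U * contract j (minorCoords M) V = 0 := by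
  by_cases hV : (V.card : ℤ) = k - 1
  swap
  · refine Finset.sum_eq_zero fun j _ => ?_
    rw [(isHomogeneous_minorCoords M).contract j V hV, mul_zero]
  obtain rfl : k = V.card + 1 := by omega
  simp_rw [contract_minorCoords_eq_sum M rfl, Finset.mul_sum]
  rw [Finset.sum_comm]
  refine Finset.sum_eq_zero fun i _ => ?_
  calc ∑ j, wedge j (minorCoords M) U
          * ((-1) ^ (i : ℕ) * M i j * (M.submatrix i.succAbove (V.orderEmbOfFin rfl)).det)
      = (-1) ^ (i : ℕ) * (M.submatrix i.succAbove (V.orderEmbOfFin rfl)).det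
          * ∑ j, wedge j (minorCoords M) U * M i j := by
        rw [Finset.mul_sum]; exact Finset.sum_congr rfl fun j _ => by ring
    _ = 0 := by rw [sum_wedge_minorCoords_mul_apply, mul_zero]

lemma plucker_relation_three_finset (M : Matrix (Fin k) (Fin n) ℂ) {S T : Finset (Fin n)}
    (hS : S.card = k) (hT : T.card = k) (a b : Fin n) :
    ∑ j ∈ S \ T, genR j (genR a (minorCoords M)) S * genR j (genR b (minorCoords M)) T
      = -(if a ∉ T then (1 : ℂ) else 0) * minorCoords M S
            * genR a (genR b (minorCoords M)) T
        + (if a ∉ S then (1 : ℂ) else 0) * genR a (genR b (minorCoords M)) S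
            * minorCoords M T := by
  set ψ := minorCoords M
  have hψ : IsHomogeneous k ψ := isHomogeneous_minorCoords M
  have hplucker : ∑ j, genR a (wedge j ψ) S * genR b (contract j ψ) T = 0 := by
    simp_rw [genR_apply, mul_mul_mul_comm, ← Finset.mul_sum]
    rw [sum_wedge_mul_contract_minorCoords, mul_zero]
  rw [sum_sdiff_genR_mul_genR, sum_wedge_genR_mul_contract_genR, hplucker,
    genR_wedge_apply_of_card hψ a b (by exact_mod_cast hS),
    genR_contract_apply_of_card hψ a b (by exact_mod_cast hT)]
  split_ifs <;> ring

end Minors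

end SpinModule

open SpinModule

theorem plucker_relation_three_general (n k : ℕ)
    (M : Matrix (Fin k) (Fin n) ℂ)
    (J K : List (Fin n)) (hJ : J.Nodup) (hK : K.Nodup)
    (hJl : J.length = k) (hKl : K.length = k) (a b : Fin n) :
    ∑ j ∈ J.toFinset \ K.toFinset,
        Zcoord (minorCoords M) (a :: j :: J) * Zcoord (minorCoords M) (b :: j :: K)
      = -(if a ∉ K.toFinset then (1 : ℂ) else 0)
            * Zcoord (minorCoords M) J * Zcoord (minorCoords M) (b :: a :: K)
        + (if a ∉ J.toFinset then (1 : ℂ) else 0)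
            * Zcoord (minorCoords M) (b :: a :: J) * Zcoord (minorCoords M) K := by
  obtain ⟨εJ, hεJ⟩ := exists_Zcoord_eq_mul_of_nodup hJ
  obtain ⟨εK, hεK⟩ := exists_Zcoord_eq_mul_of_nodup hK
  have hJcard : J.toFinset.card = k := by rw [List.toFinset_card_of_nodup hJ, hJl]
  have hKcard : K.toFinset.card = k := by rw [List.toFinset_card_of_nodup hK, hKl]
  simp only [Zcoord_cons_cons, hεJ, hεK]
  calc ∑ j ∈ J.toFinset \ K.toFinset, εJ * genR j (genR a (minorCoords M)) J.toFinset
          * (εK * genR j (genR b (minorCoords M)) K.toFinset)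
      = εJ * εK * ∑ j ∈ J.toFinset \ K.toFinset, genR j (genR a (minorCoords M)) J.toFinset
          * genR j (genR b (minorCoords M)) K.toFinset := by
        rw [Finset.mul_sum]; exact Finset.sum_congr rfl fun j _ => by ring
    _ = _ := by
        rw [plucker_relation_three_finset M hJcard hKcard]
        ring

/-- Plücker relation, form (3) of Lemma 3.5: for Plücker coordinates `Z` of a rank-`k`
`k × n` matrix, multi-indices `J`, `K` of length `k` and any `a`, `b`,
`Σ_{j ∈ J\K} Z^{ajJ} Z^{bjK} = −δ(a∉K)·Z^J·Z^{baK} + δ(a∉J)·Z^{baJ}·Z^K`. -/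
theorem plucker_relation_three (n k : ℕ)
    (M : Matrix (Fin k) (Fin n) ℂ) (hM : M.rank = k)
    (J K : List (Fin n)) (hJ : J.Nodup) (hK : K.Nodup)
    (hJl : J.length = k) (hKl : K.length = k) (a b : Fin n) :
    ∑ j ∈ J.toFinset \ K.toFinset,
        Zcoord (minorCoords M) (a :: j :: J) * Zcoord (minorCoords M) (b :: j :: K)
      = -(if a ∉ K.toFinset then (1 : ℂ) else 0)
            * Zcoord (minorCoords M) J * Zcoord (minorCoords M) (b :: a :: K)
        + (if a ∉ J.toFinset then (1 : ℂ) else 0)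
            * Zcoord (minorCoords M) (b :: a :: J) * Zcoord (minorCoords M) K :=
  plucker_relation_three_general n k M J K hJ hK hJl hKl a b
end

section
/- Let d, D, E, d₀ be linear operators on a vector space over ℂ with [d, D] = E, [E, D] = −2 D d₀, [d₀, D] = 0, [E, d₀] = 0. Then for any formal power series f(x) = Σ aₙ xⁿ (with the operator series interpreted termwise, e.g. D locally nilpotent or f a polynomial), [d, f(D)] = f'(D)·E − f''(D)·D·d₀. -/
open Polynomial in
/-- Lemma 3.2(2): if operators `d, D, E, d₀` satisfy `[d,D] = E`, `[E,D] = −2·D·d₀`,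
`[d₀,D] = 0` and `[E,d₀] = 0`, then for any polynomial `f`,
`[d, f(D)] = f'(D)·E − f''(D)·D·d₀`. -/
theorem commutator_with_polynomial (V : Type*) [AddCommGroup V] [Module ℂ V]
    (d D E d₀ : Module.End ℂ V)
    (h1 : d * D - D * d = E)
    (h2 : E * D - D * E = -((2 : ℂ) • (D * d₀)))
    (h3 : d₀ * D - D * d₀ = 0)
    (h4 : E * d₀ - d₀ * E = 0)
    (f : Polynomial ℂ) :
    d * Polynomial.aeval D f - Polynomial.aeval D f * d
      = Polynomial.aeval D (Polynomial.derivative f) * E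
        - Polynomial.aeval D (Polynomial.derivative (Polynomial.derivative f)) * D * d₀ := by
  have e2 : E * D = D * E - (2:ℂ) • (D * d₀) := by
    rw [sub_eq_iff_eq_add] at h2; rw [h2]; abel
  have e3 : d₀ * D = D * d₀ := by rw [← sub_eq_zero]; exact h3
  have key : ∀ n : ℕ, d * D^(n+1) - D^(n+1) * d
      = ((n+1 : ℕ) : ℂ) • (D^n * E) - (((n+1)*n : ℕ) : ℂ) • (D^n * d₀) := by
    intro n
    induction n with
    | zero => simpa using h1
    | succ n ih =>
      calc d * D^(n+1+1) - D^(n+1+1) * d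
          = (d * D^(n+1) - D^(n+1)*d) * D + D^(n+1) * (d*D - D*d) := by
            rw [pow_succ]; noncomm_ring
        _ = (((n+1 : ℕ) : ℂ) • (D^n * E) - (((n+1)*n : ℕ) : ℂ) • (D^n * d₀)) * D
              + D^(n+1) * E := by rw [ih, h1]
        _ = ((n+1 : ℕ) : ℂ) • (D^n * (E * D)) - (((n+1)*n : ℕ) : ℂ) • (D^n * (d₀ * D))
              + D^(n+1) * E := by
            rw [sub_mul, smul_mul_assoc, smul_mul_assoc, mul_assoc, mul_assoc]
        _ = ((n+1 : ℕ) : ℂ) • (D^n * (D * E - (2:ℂ) • (D * d₀)))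
              - (((n+1)*n : ℕ) : ℂ) • (D^n * (D * d₀)) + D^(n+1) * E := by rw [e2, e3]
        _ = ((n+1+1 : ℕ) : ℂ) • (D^(n+1) * E) - (((n+1+1)*(n+1) : ℕ) : ℂ) • (D^(n+1) * d₀) := by
            simp only [pow_succ, mul_assoc, mul_sub, smul_sub, mul_smul_comm]
            match_scalars <;> push_cast <;> ring
  induction f using Polynomial.induction_on with
  | C a =>
      simp [Polynomial.aeval_C, Algebra.commutes]
  | add p q hp hq =>
      simp only [map_add, Polynomial.derivative_add]
      calc d * (aeval D p + aeval D q) - (aeval D p + aeval D q) * d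
          = (d * aeval D p - aeval D p * d) + (d * aeval D q - aeval D q * d) := by
            noncomm_ring
        _ = (aeval D (derivative p) * E - aeval D (derivative (derivative p)) * D * d₀)
            + (aeval D (derivative q) * E - aeval D (derivative (derivative q)) * D * d₀) := by
            rw [hp, hq]
        _ = _ := by noncomm_ring
  | monomial n a ih =>
      clear ih
      rcases n with _ | m
      · simp only [zero_add, pow_one, derivative_X, derivative_one, map_one, one_mul,
          map_mul, aeval_C, aeval_X, map_zero, mul_zero, zero_mul, sub_zero, mul_one]
        simp only [derivative_C_mul, derivative_X, mul_one, derivative_C, map_mul,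
          aeval_C, aeval_X, map_one, map_zero, mul_zero, zero_mul, sub_zero]
        rw [← h1]
        simp only [Algebra.algebraMap_eq_smul_one, smul_mul_assoc, one_mul, mul_smul_comm,
          mul_sub]
      · have hk := key (m+1)
        simp only [derivative_C_mul, derivative_X_pow, map_mul, aeval_C, map_nsmul,
          aeval_X_pow, Nat.add_sub_cancel, derivative_smul]
        simp only [Algebra.algebraMap_eq_smul_one, smul_mul_assoc, one_mul, smul_smul]
        rw [show (m:ℕ)+1+1 = m+2 from rfl] at hk ⊢
        calc d * (a • D ^ (m + 2)) - a • D ^ (m + 2) * d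
            = a • (d * D^(m+2) - D^(m+2) * d) := by
              rw [mul_smul_comm, smul_mul_assoc, smul_sub]
          _ = a • (((m+2 : ℕ) : ℂ) • (D^(m+1) * E) - (((m+2)*(m+1) : ℕ) : ℂ) • (D^(m+1) * d₀)) := by
              rw [hk]
          _ = _ := by
              simp only [smul_sub, smul_smul, smul_mul_assoc, pow_succ, mul_assoc]
              match_scalars <;> push_cast <;> ring
end

section
/- For the Grassmannian Z_k ≅ G_{k,n} with Plücker-type coordinates, fix a length-k subsequence I of (1,…,n) and the affine chart U_I = {Z^I ≠ 0} with coordinates w_{ij} = Z^{ijI}/Z^I for i ∈ I, j ∉ I. Setting z^J = Z^J/Z^I for length-k subsequences J, the partial derivative satisfies ∂z^J/∂w_{ij} = −z^{ijJ} if i ∉ J and j ∈ J, and ∂z^J/∂w_{ij} = 0 otherwise. -/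
/-! For a list `L` without repetitions, the antisymmetric coordinate `Z^L` of the minors of a
`k × n` matrix is the minor on the columns of `L` taken in the order of `L`: induct on `L`,
matching the sign `θ_{aL} = ± θ_{{a} ∪ L}` against the Laplace expansion along the column `a`.
On the chart `U_I` the coordinate `w_{ij}` enters only column `j`, affinely with slope the
column `i` (the unit vector at the row of `i`). Hence `∂z^J/∂w_{ij}` vanishes if `j ∉ J`, and
otherwise is the minor on `J` with `j` replaced by `i`: zero if also `i ∈ J` (two equal
columns), and otherwise `z^{J[j ↦ i]} = -z^{ijJ}` by the relations `θ_{jj…} = -θ_{…}` and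
`θ_{ab…} = -θ_{ba…}`. -/

open Complex

/-- The `k × n` matrix of the affine chart `U_I` of `G_{k,n}`: the columns in `I` form
the identity matrix, and the remaining entries are the chart coordinates `w`. -/
noncomputable def chartMatrix {n k : ℕ} (I : Finset (Fin n)) (hI : I.card = k)
    (w : Fin n → Fin n → ℂ) : Matrix (Fin k) (Fin n) ℂ :=
  Matrix.of fun r c =>
    if c ∈ I then (if I.orderEmbOfFin hI r = c then 1 else 0)
    else w (I.orderEmbOfFin hI r) c

section Clifford

variable {n : ℕ}

lemma symmDiff_singleton_of_mem {S : Finset (Fin n)} {a : Fin n} (h : a ∈ S) :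
    symmDiff S {a} = S.erase a := by
  ext x; by_cases hx : x = a <;> simp [Finset.mem_symmDiff, hx, h]

lemma symmDiff_singleton_of_notMem {S : Finset (Fin n)} {a : Fin n} (h : a ∉ S) :
    symmDiff S {a} = insert a S := by
  ext x; by_cases hx : x = a <;> simp [Finset.mem_symmDiff, hx, h]

lemma neg_one_pow_card_symmDiff_singleton (X : Finset (Fin n)) (a : Fin n) :
    (-1 : ℂ) ^ (symmDiff X {a}).card = -(-1) ^ X.card := by
  by_cases ha : a ∈ X
  · rw [symmDiff_singleton_of_mem ha, ← Finset.card_erase_add_one ha, pow_succ,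
      Finset.card_erase_of_mem ha]
    ring
  · rw [symmDiff_singleton_of_notMem ha, Finset.card_insert_of_notMem ha, pow_succ]
    ring

lemma filter_lt_symmDiff_singleton (S : Finset (Fin n)) (a b : Fin n) :
    (symmDiff S {a}).filter (· < b) =
      if a < b then symmDiff (S.filter (· < b)) {a} else S.filter (· < b) := by
  ext x
  by_cases hx : x = a <;> split_ifs <;> simp_all [Finset.mem_symmDiff]

lemma cliffordSign_symmDiff_singleton (a b : Fin n) (S : Finset (Fin n)) :
    cliffordSign b (symmDiff S {a}) = (if a ≤ b then -1 else 1) * cliffordSign b S := by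
  unfold cliffordSign
  rw [filter_lt_symmDiff_singleton]
  rcases lt_trichotomy a b with hab | rfl | hab
  · have hb : b ∈ symmDiff S {a} ↔ b ∈ S := by simp [Finset.mem_symmDiff, hab.ne']
    simp only [if_pos hab, if_pos hab.le, neg_one_pow_card_symmDiff_singleton, hb]
    ring
  · by_cases ha : a ∈ S <;> simp [Finset.mem_symmDiff, ha]
  · have hb : b ∈ symmDiff S {a} ↔ b ∈ S := by simp [Finset.mem_symmDiff, hab.ne]
    simp [not_lt.mpr hab.le, not_le.mpr hab, hb]

lemma cliffordSign_mul_self (a : Fin n) (S : Finset (Fin n)) :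
    cliffordSign a S * cliffordSign a S = 1 := by
  unfold cliffordSign
  split_ifs <;> rw [← sq, mul_pow, ← pow_mul, pow_mul'] <;> simp

lemma genR_genR_self (a : Fin n) (f : SpinModule n) : genR a (genR a f) = -f := by
  funext S
  simp only [genR, LinearMap.coe_mk, AddHom.coe_mk, symmDiff_symmDiff_cancel_right,
    cliffordSign_symmDiff_singleton, le_refl, if_true, Pi.neg_apply]
  linear_combination (-f S) * cliffordSign_mul_self a S

lemma genR_genR_comm {a b : Fin n} (hab : a ≠ b) (f : SpinModule n) :
    genR a (genR b f) = -genR b (genR a f) := by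
  funext S
  simp only [genR, LinearMap.coe_mk, AddHom.coe_mk, Pi.neg_apply,
    cliffordSign_symmDiff_singleton, symmDiff_right_comm S {a} {b}]
  rcases hab.lt_or_gt with h | h
  · simp [h.le, not_le.mpr h]; ring
  · simp [h.le, not_le.mpr h]; ring

end Clifford

section ThetaList

variable {n : ℕ}

@[simp]
lemma thetaList_cons (a : Fin n) (L : List (Fin n)) :
    thetaList (a :: L) = genR a (thetaList L) := rfl

lemma genR_single (a : Fin n) (S : Finset (Fin n)) (c : ℂ) :
    genR a (Pi.single S c) = Pi.single (symmDiff S {a}) (cliffordSign a (symmDiff S {a}) * c) := by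
  funext T
  simp only [genR, LinearMap.coe_mk, AddHom.coe_mk]
  rcases eq_or_ne T (symmDiff S {a}) with rfl | h
  · simp [symmDiff_symmDiff_cancel_right]
  · have h' : symmDiff T {a} ≠ S := fun h' => h (by rw [← h', symmDiff_symmDiff_cancel_right])
    simp [h, h']

def nodupSign : List (Fin n) → ℂ
  | [] => 1
  | a :: L => cliffordSign a (insert a L.toFinset) * nodupSign L

lemma thetaList_of_nodup {L : List (Fin n)} (hL : L.Nodup) :
    thetaList L = Pi.single L.toFinset (nodupSign L) := by
  induction L with
  | nil => rfl
  | cons a L ih =>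
    rw [List.nodup_cons] at hL
    have ha : a ∉ L.toFinset := List.mem_toFinset.not.mpr hL.1
    rw [thetaList_cons, ih hL.2, genR_single, symmDiff_singleton_of_notMem ha,
      List.toFinset_cons, nodupSign]

lemma Zcoord_of_nodup (ψ : SpinModule n) {L : List (Fin n)} (hL : L.Nodup) :
    Zcoord ψ L = nodupSign L * ψ L.toFinset := by
  rw [Zcoord, thetaList_of_nodup hL, Finset.sum_eq_single L.toFinset] <;> simp_all

lemma Zcoord_eq_neg_of_thetaList {ψ : SpinModule n} {L L' : List (Fin n)}
    (h : thetaList L = -thetaList L') : Zcoord ψ L = -Zcoord ψ L' := by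
  simp [Zcoord, h, Finset.sum_neg_distrib]

lemma thetaList_cons_cons_eq_neg_set {i j : Fin n} {J : List (Fin n)} (hJ : J.Nodup)
    (hi : i ∉ J) {p : ℕ} (hp : J[p]? = some j) :
    thetaList (i :: j :: J) = -thetaList (J.set p i) := by
  induction J generalizing p with
  | nil => simp at hp
  | cons x J ih =>
    rw [List.nodup_cons] at hJ
    rw [List.mem_cons, not_or] at hi
    cases p with
    | zero =>
      obtain rfl : x = j := by simpa using hp
      simp [genR_genR_self]
    | succ p =>
      have hxj : x ≠ j := fun h => hJ.1 (h ▸ List.mem_of_getElem? hp)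
      have := ih hJ.2 hi.2 hp
      simp only [thetaList_cons, List.set_cons_succ] at this ⊢
      rw [genR_genR_comm hxj.symm, map_neg, genR_genR_comm hi.1, neg_neg, this, map_neg]

end ThetaList

section Minors

variable {n : ℕ}

lemma card_filter_lt_orderEmbOfFin {k : ℕ} (S : Finset (Fin n)) (h : S.card = k) (s : Fin k) :
    (S.filter (· < S.orderEmbOfFin h s)).card = s := by
  have : S.filter (· < S.orderEmbOfFin h s)
      = (Finset.Iio s).map (S.orderEmbOfFin h).toEmbedding := by
    ext x
    simp only [Finset.mem_filter, Finset.mem_map, Finset.mem_Iio, RelEmbedding.coe_toEmbedding]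
    constructor
    · rintro ⟨hx, hlt⟩
      obtain ⟨t, rfl⟩ : x ∈ Set.range (S.orderEmbOfFin h) := by
        rwa [Finset.range_orderEmbOfFin]
      exact ⟨t, (S.orderEmbOfFin h).lt_iff_lt.mp hlt, rfl⟩
    · rintro ⟨t, ht, rfl⟩
      exact ⟨S.orderEmbOfFin_mem h t, (S.orderEmbOfFin h).lt_iff_lt.mpr ht⟩
  rw [this, Finset.card_map, Fin.card_Iio]

lemma exists_orderEmbOfFin_insert {m : ℕ} {S : Finset (Fin n)} {a : Fin n} (ha : a ∉ S)
    (hS : S.card = m) :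
    ∃ p : Fin (m + 1), (p : ℕ) = (S.filter (· < a)).card ∧
      (insert a S).orderEmbOfFin (by rw [Finset.card_insert_of_notMem ha, hS]) p = a ∧
      (insert a S).orderEmbOfFin (by rw [Finset.card_insert_of_notMem ha, hS]) ∘ p.succAbove
        = S.orderEmbOfFin hS := by
  have hT : (insert a S).card = m + 1 := by rw [Finset.card_insert_of_notMem ha, hS]
  set σ := (insert a S).orderEmbOfFin hT
  obtain ⟨p, hp⟩ : a ∈ Set.range σ := by
    rw [Finset.range_orderEmbOfFin]; exact Finset.mem_insert_self a S
  refine ⟨p, ?_, hp, ?_⟩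
  · rw [← card_filter_lt_orderEmbOfFin _ hT p, hp, Finset.filter_insert, if_neg (lt_irrefl a)]
  · refine (Finset.orderEmbOfFin_unique hS (fun x => ?_) (σ.strictMono.comp
      (Fin.strictMono_succAbove p)))
    have hx : σ (p.succAbove x) ≠ a := hp ▸ σ.injective.ne (Fin.succAbove_ne p x)
    exact (Finset.mem_insert.mp ((insert a S).orderEmbOfFin_mem hT _)).resolve_left hx

/-- Laplace expansion of the minor on `insert a S` along the column `a`. -/
lemma cliffordSign_mul_minorCoords_insert {m : ℕ} (A : Matrix (Fin (m + 1)) (Fin n) ℂ)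
    {S : Finset (Fin n)} {a : Fin n} (ha : a ∉ S) (hS : S.card = m) :
    cliffordSign a (insert a S) * minorCoords A (insert a S)
      = ∑ r : Fin (m + 1),
          (-1) ^ (r : ℕ) * A r a * minorCoords (A.submatrix r.succAbove id) S := by
  have hT : (insert a S).card = m + 1 := by rw [Finset.card_insert_of_notMem ha, hS]
  obtain ⟨p, hpS, hpa, hsucc⟩ := exists_orderEmbOfFin_insert ha hS
  have hsign : cliffordSign a (insert a S) = (-1) ^ (p : ℕ) := by
    rw [cliffordSign, Finset.filter_insert, if_neg (lt_irrefl a), hpS, if_pos (by simp),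
      mul_one]
  rw [hsign, minorCoords, dif_pos hT, Matrix.det_succ_column _ p, Finset.mul_sum]
  refine Finset.sum_congr rfl fun r _ => ?_
  rw [minorCoords, dif_pos hS]
  simp only [Matrix.submatrix_apply, Matrix.submatrix_submatrix, Function.comp_id,
    Function.id_comp, id, hpa, hsucc, pow_add]
  have hpp : ((-1 : ℂ) ^ (p : ℕ)) * (-1) ^ (p : ℕ) = 1 := by
    rw [← pow_add]; exact Even.neg_one_pow ⟨p, rfl⟩
  linear_combination (-1) ^ (r : ℕ) * A r a *
    (A.submatrix r.succAbove (S.orderEmbOfFin hS)).det * hpp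

end Minors

lemma List.set_get_comp_cast {α : Type*} {L : List α} {k : ℕ} (hk : L.length = k) (q : Fin k)
    (x : α) (hk' : (L.set q x).length = k) :
    (L.set q x).get ∘ Fin.cast hk'.symm = Function.update (L.get ∘ Fin.cast hk.symm) q x := by
  funext s
  rcases eq_or_ne s q with rfl | hs
  · simp
  · simp [hs, Fin.val_injective.ne hs.symm]

theorem Zcoord_minorCoords_of_nodup {n k : ℕ} {L : List (Fin n)} (hL : L.Nodup)
    (A : Matrix (Fin k) (Fin n) ℂ) (hk : L.length = k) :
    Zcoord (minorCoords A) L = (A.submatrix id (L.get ∘ Fin.cast hk.symm)).det := by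
  induction L generalizing k with
  | nil =>
    subst hk
    simp [Zcoord_of_nodup, minorCoords, nodupSign]
  | cons a L ih =>
    subst hk
    rw [List.nodup_cons] at hL
    have ha : a ∉ L.toFinset := List.mem_toFinset.not.mpr hL.1
    have hS : L.toFinset.card = L.length := List.toFinset_card_of_nodup hL.2
    rw [Zcoord_of_nodup _ (List.nodup_cons.mpr hL), nodupSign, List.toFinset_cons, mul_right_comm,
      mul_comm, cliffordSign_mul_minorCoords_insert A ha hS,
      Matrix.det_succ_column_zero, Finset.mul_sum]
    refine Finset.sum_congr rfl fun r _ => ?_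
    have hcols : (A.submatrix id ((a :: L).get ∘ Fin.cast rfl)).submatrix r.succAbove Fin.succ
        = (A.submatrix r.succAbove id).submatrix id (L.get ∘ Fin.cast rfl) := rfl
    rw [hcols, ← ih hL.2 _ rfl, Zcoord_of_nodup _ hL.2]
    change _ = (-1) ^ (r : ℕ) * A r a * _
    ring

section MatrixColumns

variable {m o p α : Type*}

lemma submatrix_updateCol_of_injective [DecidableEq o] [DecidableEq p] (M : Matrix m o α)
    {f : p → o} (hf : Function.Injective f) (q : p) (c : m → α) :
    (M.updateCol (f q) c).submatrix id f = (M.submatrix id f).updateCol q c := by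
  ext r s
  simp [Matrix.updateCol_apply, hf.eq_iff]

lemma submatrix_updateCol_of_notMem_range [DecidableEq o] (M : Matrix m o α) {f : p → o} {j : o}
    (hj : j ∉ Set.range f) (c : m → α) :
    (M.updateCol j c).submatrix id f = M.submatrix id f := by
  ext r s
  simp only [Matrix.submatrix_apply, id, Matrix.updateCol_apply, ite_eq_right_iff]
  exact fun h => absurd ⟨s, h⟩ hj

lemma updateCol_submatrix_eq_submatrix_update [DecidableEq p] (M : Matrix m o α) (f : p → o)
    (q : p) (j : o) :
    (M.submatrix id f).updateCol q (fun r => M r j) = M.submatrix id (Function.update f q j) := by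
  ext r s
  by_cases hs : s = q <;> simp [hs]

lemma hasDerivAt_det_updateCol {𝕜 : Type*} [NontriviallyNormedField 𝕜] [Fintype p]
    [DecidableEq p] (B : Matrix p p 𝕜) (q : p) (u v : p → 𝕜) (t : 𝕜) :
    HasDerivAt (fun t => (B.updateCol q (fun r => u r + t * v r)).det) (B.updateCol q v).det t := by
  have hdet : ∀ t, (B.updateCol q (fun r => u r + t * v r)).det
      = (B.updateCol q u).det + t * (B.updateCol q v).det := fun t => by
    rw [← Matrix.det_updateCol_smul, ← Matrix.det_updateCol_add]; rfl
  simp only [hdet]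
  simpa using ((hasDerivAt_id t).mul_const (B.updateCol q v).det).const_add (B.updateCol q u).det

end MatrixColumns

section Chart

variable {n k : ℕ} (I : Finset (Fin n)) (hI : I.card = k) (w : Fin n → Fin n → ℂ)
  {i j : Fin n}

lemma chartMatrix_update_eq_updateCol (hi : i ∈ I) (hj : j ∉ I) (t : ℂ) :
    chartMatrix I hI (Function.update w i (Function.update (w i) j t))
      = (chartMatrix I hI w).updateCol j (fun r =>
          chartMatrix I hI (Function.update w i (Function.update (w i) j 0)) r j
            + t * chartMatrix I hI w r i) := by
  ext r c
  by_cases hc : c = j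
  · subst hc
    by_cases hr : I.orderEmbOfFin hI r = i <;> simp [chartMatrix, hi, hj, hr]
  · by_cases hr : I.orderEmbOfFin hI r = i <;>
      simp [chartMatrix, hc, hr, Function.update_apply]

lemma hasDerivAt_det_submatrix_chartMatrix_update (hi : i ∈ I) (hj : j ∉ I)
    {f : Fin k → Fin n} (hf : Function.Injective f) {q : Fin k} (hq : f q = j) (t : ℂ) :
    HasDerivAt (fun t => ((chartMatrix I hI
        (Function.update w i (Function.update (w i) j t))).submatrix id f).det)
      ((chartMatrix I hI w).submatrix id (Function.update f q i)).det t := by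
  have hcurve : ∀ s : ℂ,
      (chartMatrix I hI (Function.update w i (Function.update (w i) j s))).submatrix id f
        = ((chartMatrix I hI w).submatrix id f).updateCol q (fun r =>
            chartMatrix I hI (Function.update w i (Function.update (w i) j 0)) r j
              + s * chartMatrix I hI w r i) := fun s => by
    rw [chartMatrix_update_eq_updateCol I hI w hi hj, ← hq, submatrix_updateCol_of_injective _ hf]
  simp only [hcurve, ← updateCol_submatrix_eq_submatrix_update]
  exact hasDerivAt_det_updateCol _ q _ _ t

lemma submatrix_chartMatrix_update_of_notMem_range (hi : i ∈ I) (hj : j ∉ I)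
    {f : Fin k → Fin n} (hjf : j ∉ Set.range f) (t : ℂ) :
    (chartMatrix I hI (Function.update w i (Function.update (w i) j t))).submatrix id f
      = (chartMatrix I hI w).submatrix id f := by
  rw [chartMatrix_update_eq_updateCol I hI w hi hj, submatrix_updateCol_of_notMem_range _ hjf]

end Chart

/-- Lemma 3.5(1): on the chart `U_I` of `G_{k,n}` with coordinates
`w_{ij} = Z^{ijI}/Z^I` (`i ∈ I`, `j ∉ I`), the normalized Plücker coordinates
`z^J = Z^J/Z^I` satisfy `∂z^J/∂w_{ij} = −z^{ijJ}` if `i ∉ J` and `j ∈ J`, and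
`∂z^J/∂w_{ij} = 0` otherwise. -/
theorem chart_partial_derivative (n k : ℕ) (I : Finset (Fin n)) (hI : I.card = k)
    (w : Fin n → Fin n → ℂ) (i j : Fin n) (hi : i ∈ I) (hj : j ∉ I)
    (J : List (Fin n)) (hJ : J.Nodup) (hJl : J.length = k) :
    deriv (fun t : ℂ =>
        Zcoord (minorCoords (chartMatrix I hI
          (Function.update w i (Function.update (w i) j t)))) J) (w i j)
      = if i ∉ J.toFinset ∧ j ∈ J.toFinset then
          -Zcoord (minorCoords (chartMatrix I hI w)) (i :: j :: J)
        else 0 := by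
  simp only [Zcoord_minorCoords_of_nodup hJ _ hJl, List.mem_toFinset]
  set f := J.get ∘ Fin.cast hJl.symm
  have hf : Function.Injective f :=
    (List.nodup_iff_injective_get.mp hJ).comp (Fin.cast_injective _)
  have hmem : ∀ {x}, x ∈ J ↔ x ∈ Set.range f := fun {x} => by
    simp [f, List.mem_iff_get, (finCongr hJl.symm).surjective.exists]
  by_cases hjJ : j ∈ J
  · obtain ⟨q, hq⟩ := hmem.mp hjJ
    rw [(hasDerivAt_det_submatrix_chartMatrix_update I hI w hi hj hf hq _).deriv]
    by_cases hiJ : i ∈ J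
    · obtain ⟨q', hq'⟩ := hmem.mp hiJ
      have hqq' : q ≠ q' := fun h => (ne_of_mem_of_not_mem hi hj) (by rw [← hq', ← h, hq])
      rw [if_neg (fun h => h.1 hiJ)]
      refine Matrix.det_zero_of_column_eq hqq' fun r => ?_
      simp [hqq'.symm, hq']
    · have hp : J[(q : ℕ)]? = some j := by simp [← hq, f]
      have hlen : (J.set q i).length = k := by simp [hJl]
      rw [if_pos ⟨hiJ, hjJ⟩,
        Zcoord_eq_neg_of_thetaList (thetaList_cons_cons_eq_neg_set hJ hiJ hp), neg_neg,
        Zcoord_minorCoords_of_nodup (hJ.set hiJ) _ hlen, List.set_get_comp_cast hJl q i hlen]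
  · rw [if_neg (fun h => hjJ h.2)]
    simp only [submatrix_chartMatrix_update_of_notMem_range I hI w hi hj (hmem.not.mp hjJ)]
    exact deriv_const _ _
end
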